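/- arXiv:0907.1116 — 2 statements merged into one kernel-verified Lean document; each statement's English description precedes it below -/
import Mathlib

section
/- Let a ∈ (0,1), let c > 0, and let Z be a real random variable whose law is absolutely continuous (Z has a density) and satisfies E Z² < ∞. Then (1/(−log(cε))) · Σ_{n≥1} (1/n) · P(|Z| > c ε n^a) converges to 1/a as ε → 0⁺. -/
/-!
Write `F x = P(|Z| > x)`, `s = c ε` and `L = -log s`. Since `F ≤ 1`, the terms with
`n ≤ s^(-1/a)` contribute at most a harmonic sum `≈ L / a`, and Markov's inequality
`F x ≤ E Z² / x²` makes the remaining terms sum to `O(1)`. Conversely, `Z` has a density, so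
`P(Z = 0) = 0` and `F x → 1` as `x → 0⁺`; if `F ≥ η` on `(0, t]`, the terms with `s n^a ≤ t`
contribute at least `η (L + log t) / a`. Letting `η → 1` gives the limit `1 / a`.
-/

open MeasureTheory ProbabilityTheory Filter Real Topology Set

lemma tsum_rpow_tail_le {r : ℝ} (hr : 0 < r) {N : ℕ} (hN : 0 < N) :
    ∑' m : ℕ, ((m + N + 1 : ℕ) : ℝ) ^ (-(1 + r)) ≤ (N : ℝ) ^ (-r) / r := by
  have hN' : (0 : ℝ) < N := by exact_mod_cast hN
  have hexp : -(1 + r) < -1 := by linarith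
  calc ∑' m : ℕ, ((m + N + 1 : ℕ) : ℝ) ^ (-(1 + r))
      ≤ ∫ x in Ioi (N : ℝ), x ^ (-(1 + r)) := by
        refine AntitoneOn.tsum_comp_add_le_integral N (fun x hx y _ hxy => ?_)
          (integrableOn_Ioi_rpow_of_lt hexp hN') (fun x hx => ?_)
        · exact rpow_le_rpow_of_nonpos (hN'.trans_le hx) hxy (by linarith)
        · exact rpow_nonneg (hN'.trans hx).le _
    _ = (N : ℝ) ^ (-r) / r := by
        rw [integral_Ioi_rpow_of_lt hexp hN']
        ring_nf

lemma sum_range_one_div_eq_harmonic (n : ℕ) :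
    ∑ i ∈ Finset.range n, 1 / ((i : ℝ) + 1) = harmonic n := by
  simp [harmonic, one_div]

noncomputable def harmonicTailSum (F : ℝ → ℝ) (a s : ℝ) : ℝ :=
  ∑' n : ℕ, 1 / ((n : ℝ) + 1) * F (s * ((n : ℝ) + 1) ^ a)

section HarmonicTailSum

variable {F : ℝ → ℝ} {a p K s : ℝ}

lemma one_div_mul_le_rpow (hF : ∀ x, 0 < x → F x ≤ K * x ^ (-p)) (hs : 0 < s)
    {x : ℝ} (hx : 0 < x) :
    1 / x * F (s * x ^ a) ≤ K * s ^ (-p) * x ^ (-(1 + a * p)) := by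
  have hxa : 0 < x ^ a := rpow_pos_of_pos hx a
  calc 1 / x * F (s * x ^ a) ≤ 1 / x * (K * (s * x ^ a) ^ (-p)) :=
        mul_le_mul_of_nonneg_left (hF _ (mul_pos hs hxa)) (by positivity)
    _ = K * s ^ (-p) * x ^ (-(1 + a * p)) := by
        rw [mul_rpow hs.le hxa.le, ← rpow_mul hx.le, neg_add, rpow_add hx, rpow_neg_one,
          mul_neg]
        ring

lemma summable_harmonicTailSum (hF0 : ∀ x, 0 ≤ F x) (hF : ∀ x, 0 < x → F x ≤ K * x ^ (-p))
    (ha : 0 < a) (hp : 0 < p) (hs : 0 < s) :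
    Summable fun n : ℕ => 1 / ((n : ℝ) + 1) * F (s * ((n : ℝ) + 1) ^ a) := by
  have hsum : Summable fun n : ℕ => ((n : ℝ) + 1) ^ (-(1 + a * p)) := by
    exact_mod_cast (summable_nat_add_iff 1).2
      (Real.summable_nat_rpow.2 (by nlinarith : -(1 + a * p) < -1))
  refine (hsum.mul_left (K * s ^ (-p))).of_nonneg_of_le (fun n => ?_) (fun n => ?_)
  · exact mul_nonneg (by positivity) (hF0 _)
  · exact one_div_mul_le_rpow hF hs (by positivity)

/-- The cut-off `N = ⌈s^(-1/a)⌉` separates the terms bounded by `F ≤ 1` from those bounded by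
the decay of `F`. -/
lemma harmonicTailSum_le (hF0 : ∀ x, 0 ≤ F x) (hF1 : ∀ x, F x ≤ 1)
    (hF : ∀ x, 0 < x → F x ≤ K * x ^ (-p)) (ha : 0 < a) (hp : 0 < p) (hs0 : 0 < s)
    (hs1 : s ≤ 1) :
    harmonicTailSum F a s ≤ -log s / a + (1 + log 2 + K / (a * p)) := by
  set y := s ^ (-a⁻¹)
  have hy1 : 1 ≤ y := one_le_rpow_of_pos_of_le_one_of_nonpos hs0 hs1 (by simp [ha.le])
  set N := ⌈y⌉₊
  have hyN : y ≤ N := Nat.le_ceil y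
  have hN0 : 0 < N := Nat.ceil_pos.2 (by linarith)
  have hN2y : (N : ℝ) ≤ 2 * y := by linarith [Nat.ceil_lt_add_one (zero_le_one.trans hy1)]
  have hK : 0 ≤ K := by simpa using (hF0 1).trans (hF 1 one_pos)
  have head : ∑ i ∈ Finset.range N, 1 / ((i : ℝ) + 1) * F (s * ((i : ℝ) + 1) ^ a) ≤
      -log s / a + (1 + log 2) := by
    calc _ ≤ ∑ i ∈ Finset.range N, 1 / ((i : ℝ) + 1) :=
          Finset.sum_le_sum fun i _ => mul_le_of_le_one_right (by positivity) (hF1 _)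
      _ = harmonic N := sum_range_one_div_eq_harmonic N
      _ ≤ 1 + log N := harmonic_le_one_add_log N
      _ ≤ 1 + log (2 * y) := by gcongr
      _ = -log s / a + (1 + log 2) := by
          rw [log_mul two_ne_zero (by positivity), log_rpow hs0]; ring
  have tail : ∑' m : ℕ, 1 / (((m + N : ℕ) : ℝ) + 1) * F (s * (((m + N : ℕ) : ℝ) + 1) ^ a) ≤
      K / (a * p) := by
    have hNs : (N : ℝ) ^ (-(a * p)) ≤ s ^ p := by
      calc (N : ℝ) ^ (-(a * p)) ≤ y ^ (-(a * p)) :=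
            rpow_le_rpow_of_nonpos (by linarith) hyN (by nlinarith)
        _ = s ^ p := by rw [← rpow_mul hs0.le]; field_simp
    calc _ ≤ ∑' m : ℕ, K * s ^ (-p) * ((m + N + 1 : ℕ) : ℝ) ^ (-(1 + a * p)) := by
          refine ((summable_nat_add_iff N).2
            (summable_harmonicTailSum hF0 hF ha hp hs0)).tsum_le_tsum (fun m => ?_) ?_
          · exact_mod_cast one_div_mul_le_rpow hF hs0 (by positivity)
          · exact ((summable_nat_add_iff (N + 1)).2
              (Real.summable_nat_rpow.2 (by nlinarith : -(1 + a * p) < -1))).mul_left _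
      _ = K * s ^ (-p) * ∑' m : ℕ, ((m + N + 1 : ℕ) : ℝ) ^ (-(1 + a * p)) := tsum_mul_left
      _ ≤ K * s ^ (-p) * ((N : ℝ) ^ (-(a * p)) / (a * p)) := by
          gcongr; exact tsum_rpow_tail_le (by positivity) hN0
      _ ≤ K * s ^ (-p) * (s ^ p / (a * p)) := by gcongr
      _ = K / (a * p) := by rw [rpow_neg hs0.le]; field_simp
  rw [harmonicTailSum, ← (summable_harmonicTailSum hF0 hF ha hp hs0).sum_add_tsum_nat_add N]
  linarith

lemma le_harmonicTailSum (hF0 : ∀ x, 0 ≤ F x) {η t : ℝ} (hη : 0 ≤ η)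
    (hFt : ∀ x ∈ Ioc 0 t, η ≤ F x) (ha : 0 < a)
    (hsum : Summable fun n : ℕ => 1 / ((n : ℝ) + 1) * F (s * ((n : ℝ) + 1) ^ a))
    (hs0 : 0 < s) (hst : s ≤ t) :
    η * ((log t - log s) / a) ≤ harmonicTailSum F a s := by
  have ht0 : 0 < t := hs0.trans_le hst
  set y := (t / s) ^ a⁻¹
  have hy1 : 1 ≤ y := one_le_rpow ((one_le_div hs0).2 hst) (by positivity)
  set M := ⌊y⌋₊
  have hF_head : ∀ i < M, η ≤ F (s * ((i : ℝ) + 1) ^ a) := by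
    intro i hi
    refine hFt _ ⟨by positivity, ?_⟩
    have hiy : (i : ℝ) + 1 ≤ y := by
      have : ((i + 1 : ℕ) : ℝ) ≤ M := by exact_mod_cast hi
      push_cast at this
      exact this.trans (Nat.floor_le (by linarith))
    calc s * ((i : ℝ) + 1) ^ a ≤ s * y ^ a := by gcongr
      _ = t := by
          rw [← rpow_mul (by positivity), inv_mul_cancel₀ ha.ne', rpow_one]
          field_simp
  calc η * ((log t - log s) / a) = η * log y := by
        rw [log_rpow (by positivity), log_div ht0.ne' hs0.ne']
        ring
    _ ≤ η * log (M + 1) := by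
        gcongr
        exact (Nat.lt_floor_add_one y).le
    _ ≤ η * harmonic M := by
        gcongr
        exact_mod_cast log_add_one_le_harmonic M
    _ = ∑ i ∈ Finset.range M, 1 / ((i : ℝ) + 1) * η := by
        rw [← sum_range_one_div_eq_harmonic, Finset.mul_sum]
        simp_rw [mul_comm η]
    _ ≤ ∑ i ∈ Finset.range M, 1 / ((i : ℝ) + 1) * F (s * ((i : ℝ) + 1) ^ a) :=
        Finset.sum_le_sum fun i hi => by gcongr; exact hF_head i (Finset.mem_range.1 hi)
    _ ≤ harmonicTailSum F a s :=
        hsum.sum_le_tsum _ (fun i _ => mul_nonneg (by positivity) (hF0 _))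

lemma tendsto_inv_neg_log_nhdsGT_zero : Tendsto (fun s => (-log s)⁻¹) (𝓝[>] 0) (𝓝 0) :=
  tendsto_inv_atTop_zero.comp (tendsto_neg_atBot_atTop.comp tendsto_log_nhdsGT_zero)

lemma eventually_lt_one_div_neg_log_mul_harmonicTailSum (hF0 : ∀ x, 0 ≤ F x)
    (hF : ∀ x, 0 < x → F x ≤ K * x ^ (-p)) (hF_zero : Tendsto F (𝓝[>] 0) (𝓝 1))
    (ha : 0 < a) (hp : 0 < p) {b : ℝ} (hb : b < 1 / a) :
    ∀ᶠ s in 𝓝[>] 0, b < 1 / (-log s) * harmonicTailSum F a s := by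
  have hab : a * b < 1 := by rwa [lt_div_iff₀ ha, mul_comm] at hb
  obtain ⟨η, hη, hη1⟩ := exists_between (max_lt hab one_pos)
  obtain ⟨t, ht0, hFt⟩ := mem_nhdsGT_iff_exists_Ioc_subset.1
    (hF_zero.eventually (eventually_ge_nhds hη1))
  have hbη : b < η / a := by rw [lt_div_iff₀ ha, mul_comm]; exact (le_max_left _ _).trans_lt hη
  have hlim : Tendsto (fun s => η / a + η * log t / a * (-log s)⁻¹) (𝓝[>] 0) (𝓝 (η / a)) := by
    simpa using (tendsto_inv_neg_log_nhdsGT_zero.const_mul (η * log t / a)).const_add (η / a)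
  filter_upwards [hlim.eventually (lt_mem_nhds hbη), Ioo_mem_nhdsGT (lt_min ht0 one_pos)]
    with s hbs ⟨hs0, hs⟩
  have hlog : log s < 0 := log_neg hs0 (hs.trans_le (min_le_right _ _))
  calc b < η / a + η * log t / a * (-log s)⁻¹ := hbs
    _ = 1 / (-log s) * (η * ((log t - log s) / a)) := by field_simp [hlog.ne]; ring
    _ ≤ 1 / (-log s) * harmonicTailSum F a s := mul_le_mul_of_nonneg_left
        (le_harmonicTailSum hF0 ((le_max_right _ _).trans hη.le) hFt ha
          (summable_harmonicTailSum hF0 hF ha hp hs0) hs0 (hs.le.trans (min_le_left _ _)))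
        (one_div_nonneg.2 (by linarith))

lemma eventually_one_div_neg_log_mul_harmonicTailSum_lt (hF0 : ∀ x, 0 ≤ F x)
    (hF1 : ∀ x, F x ≤ 1) (hF : ∀ x, 0 < x → F x ≤ K * x ^ (-p)) (ha : 0 < a) (hp : 0 < p)
    {b : ℝ} (hb : 1 / a < b) :
    ∀ᶠ s in 𝓝[>] 0, 1 / (-log s) * harmonicTailSum F a s < b := by
  set C := 1 + log 2 + K / (a * p)
  have hlim : Tendsto (fun s => 1 / a + C * (-log s)⁻¹) (𝓝[>] 0) (𝓝 (1 / a)) := by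
    simpa using (tendsto_inv_neg_log_nhdsGT_zero.const_mul C).const_add (1 / a)
  filter_upwards [hlim.eventually (gt_mem_nhds hb), Ioo_mem_nhdsGT one_pos] with s hbs ⟨hs0, hs1⟩
  have hlog : log s < 0 := log_neg hs0 hs1
  calc _ ≤ 1 / (-log s) * (-log s / a + C) := mul_le_mul_of_nonneg_left
        (harmonicTailSum_le hF0 hF1 hF ha hp hs0 hs1.le) (one_div_nonneg.2 (by linarith))
    _ = 1 / a + C * (-log s)⁻¹ := by field_simp [hlog.ne]; ring
    _ < b := hbs

theorem tendsto_one_div_neg_log_mul_harmonicTailSum (hF0 : ∀ x, 0 ≤ F x) (hF1 : ∀ x, F x ≤ 1)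
    (hF : ∀ x, 0 < x → F x ≤ K * x ^ (-p)) (hF_zero : Tendsto F (𝓝[>] 0) (𝓝 1))
    (ha : 0 < a) (hp : 0 < p) :
    Tendsto (fun s => 1 / (-log s) * harmonicTailSum F a s) (𝓝[>] 0) (𝓝 (1 / a)) :=
  tendsto_order.2
    ⟨fun _ hb => eventually_lt_one_div_neg_log_mul_harmonicTailSum hF0 hF hF_zero ha hp hb,
      fun _ hb => eventually_one_div_neg_log_mul_harmonicTailSum_lt hF0 hF1 hF ha hp hb⟩

end HarmonicTailSum

section TailProbability

variable {Ω : Type*} [MeasurableSpace Ω] {μ : Measure Ω} {Z : Ω → ℝ}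

lemma measureReal_lt_abs_le [IsFiniteMeasure μ] (hZ : Integrable (fun ω => Z ω ^ 2) μ) {x : ℝ}
    (hx : 0 < x) : μ.real {ω | x < |Z ω|} ≤ (∫ ω, Z ω ^ 2 ∂μ) * x ^ (-2 : ℝ) := by
  have hsub : {ω | x < |Z ω|} ⊆ {ω | x ^ 2 ≤ Z ω ^ 2} := fun ω (hω : x < |Z ω|) =>
    show x ^ 2 ≤ Z ω ^ 2 by simpa only [sq_abs] using pow_le_pow_left₀ hx.le hω.le 2
  have markov := mul_meas_ge_le_integral_of_nonneg (ae_of_all μ fun ω => sq_nonneg (Z ω)) hZ (x ^ 2)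
  rw [rpow_neg hx.le, rpow_two, ← div_eq_mul_inv, le_div_iff₀ (by positivity), mul_comm]
  exact (mul_le_mul_of_nonneg_left (measureReal_mono hsub) (by positivity)).trans markov

lemma tendsto_measureReal_lt_abs [IsProbabilityMeasure μ] (hZ : Measurable Z)
    (h0 : μ (Z ⁻¹' {0}) = 0) :
    Tendsto (fun x => μ.real {ω | x < |Z ω|}) (𝓝[>] 0) (𝓝 1) := by
  have hinter : (⋂ r > (0 : ℝ), {ω | |Z ω| ≤ r}) = Z ⁻¹' {0} := by
    ext ω
    simp only [mem_iInter, mem_ofPred_eq, mem_preimage, mem_singleton_iff]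
    refine ⟨fun h => abs_nonpos_iff.1 (le_of_forall_pos_le_add fun r hr => by simpa using h r hr),
      fun h r hr => by simp [h, hr.le]⟩
  have hle : Tendsto (fun x => μ {ω | |Z ω| ≤ x}) (𝓝[>] 0) (𝓝 0) := by
    rw [← h0, ← hinter]
    exact tendsto_measure_biInter_gt
      (fun r _ => (measurableSet_le hZ.abs measurable_const).nullMeasurableSet)
      (fun i j _ hij ω hω => le_trans hω hij) ⟨1, one_pos, measure_ne_top _ _⟩
  have hle' : Tendsto (fun x => μ.real {ω | |Z ω| ≤ x}) (𝓝[>] 0) (𝓝 0) :=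
    (ENNReal.tendsto_toReal ENNReal.zero_ne_top).comp hle
  have hcompl (x : ℝ) : μ.real {ω | x < |Z ω|} = 1 - μ.real {ω | |Z ω| ≤ x} := by
    rw [← probReal_compl_eq_one_sub (measurableSet_le hZ.abs measurable_const)]
    simp only [compl_ofPred, not_le]
  simpa [hcompl] using (tendsto_const_nhds (x := (1 : ℝ))).sub hle'

end TailProbability

lemma tendsto_const_mul_nhdsGT_zero {c : ℝ} (hc : 0 < c) :
    Tendsto (fun ε => c * ε) (𝓝[>] 0) (𝓝[>] 0) := by
  refine tendsto_nhdsWithin_iff.2 ⟨?_, eventually_nhdsWithin_of_forall fun ε hε => mul_pos hc hε⟩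
  exact ((continuous_const_mul c).tendsto' 0 0 (mul_zero c)).mono_left nhdsWithin_le_nhds

theorem stmt_3_general {Ω : Type*} [MeasureSpace Ω] [IsProbabilityMeasure (ℙ : Measure Ω)]
    (a : ℝ) (ha0 : 0 < a) (c : ℝ) (hc : 0 < c)
    (Z : Ω → ℝ) (hZmeas : Measurable Z)
    (hZdens : (Measure.map Z (ℙ : Measure Ω)) ≪ (volume : Measure ℝ))
    (hZmom : Integrable (fun ω => (Z ω) ^ 2) (ℙ : Measure Ω)) :
    Tendsto
      (fun ε : ℝ =>
        (1 / (-Real.log (c * ε))) *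
          ∑' n : ℕ, (1 / ((n : ℝ) + 1)) *
            (ℙ {ω | c * ε * ((n : ℝ) + 1) ^ a < |Z ω|}).toReal)
      (𝓝[>] 0) (𝓝 (1 / a)) := by
  have hZ0 : ℙ (Z ⁻¹' {0}) = 0 := by
    rw [← Measure.map_apply hZmeas (measurableSet_singleton 0)]
    exact hZdens Real.volume_singleton
  exact (tendsto_one_div_neg_log_mul_harmonicTailSum
    (F := fun x => (ℙ : Measure Ω).real {ω | x < |Z ω|})
    (fun _ => measureReal_nonneg) (fun _ => measureReal_le_one)
    (fun _ hx => measureReal_lt_abs_le hZmom hx) (tendsto_measureReal_lt_abs hZmeas hZ0)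
    ha0 two_pos).comp (tendsto_const_mul_nhdsGT_zero hc)

theorem stmt_3 {Ω : Type*} [MeasureSpace Ω] [IsProbabilityMeasure (ℙ : Measure Ω)]
    (a : ℝ) (ha0 : 0 < a) (ha1 : a < 1) (c : ℝ) (hc : 0 < c)
    (Z : Ω → ℝ) (hZmeas : Measurable Z)
    (hZdens : (Measure.map Z (ℙ : Measure Ω)) ≪ (volume : Measure ℝ))
    (hZmom : Integrable (fun ω => (Z ω) ^ 2) (ℙ : Measure Ω)) :
    Tendsto
      (fun ε : ℝ =>
        (1 / (-Real.log (c * ε))) *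
          ∑' n : ℕ, (1 / ((n : ℝ) + 1)) *
            (ℙ {ω | c * ε * ((n : ℝ) + 1) ^ a < |Z ω|}).toReal)
      (𝓝[>] 0) (𝓝 (1 / a)) :=
  stmt_3_general a ha0 c hc Z hZmeas hZdens hZmom
end

section
/- Let q ≥ 2 be an integer, 1 − 1/(2q) < H < 1, let c_{2,q,H} > 0 be the constant for which Z_n := V_n/(c_{2,q,H} n^{1−q(1−H)}) converges in L²(Ω) to a random variable Z with E Z² = 1. Then for every c > 0, (cε)^{1/(1−q(1−H))} · Σ_{n≥1} [ P(|Z_n| > c ε n^{1−q(1−H)}) − P(|Z| > c ε n^{1−q(1−H)}) ] converges to 0 as ε → 0⁺. -/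
/-!
Put `α = 1 - q(1 - H)`, so `1/2 < α`, `x_n = s (n + 1)^α`, `F_n = |Z_{n+1}|` and `G = |Z|`.
For `0 < θ < 1` the events `{x_n < F_n}` and `{x_n < G}` differ by at most the layer
`{(1 - θ) x_n < G ≤ (1 + θ) x_n}` plus the deviation `{θ x_n ≤ |F_n - G|}`.

By the layer-cake formula, `∑_n P(u (n + 1)^α < G) = u^(-1/α) E[G^(1/α)] + O(1)`, so after scaling
by `s^(1/α)` the layers contribute `((1 - θ)^(-1/α) - (1 + θ)^(-1/α)) E[G^(1/α)] + O(s^(1/α))`,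
which is small for small `θ`. Once `‖F_n - G‖₂ ≤ δ`, Chebyshev bounds the deviation probabilities by
`(δ / (θ x_n))²`, summable because `2α > 1`. Cutting that sum at `n ≈ (δ / (θ s))^(1/α)` and
bounding the earlier terms by one, the deviations contribute `O((δ / θ)^(1/α) + n₀ s^(1/α))`,
where `n₀` is the index from which `‖F_n - G‖₂ ≤ δ`.
-/

open MeasureTheory ProbabilityTheory Filter Real Topology
open scoped ENNReal NNReal

/-- A (centered) fractional Brownian motion with Hurst parameter `H`:
all finite-dimensional distributions are centered Gaussian (equivalently, every finite
linear combination of values of the process is a centered real Gaussian), with covariance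
`E (B s * B t) = (s^(2H) + t^(2H) - |t-s|^(2H)) / 2` for nonnegative times. -/
structure IsFractionalBrownianMotion {Ω : Type*} [MeasureSpace Ω]
    (B : ℝ → Ω → ℝ) (H : ℝ) : Prop where
  measurable : ∀ t : ℝ, Measurable (B t)
  gaussian_fdd : ∀ (n : ℕ) (t : Fin n → ℝ), (∀ i, 0 ≤ t i) → ∀ c : Fin n → ℝ,
    ∃ v : NNReal,
      Measure.map (fun ω => ∑ i, c i * B (t i) ω) (ℙ : Measure Ω) = gaussianReal 0 v
  covariance : ∀ s t : ℝ, 0 ≤ s → 0 ≤ t →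
    ∫ ω, B s ω * B t ω ∂(ℙ : Measure Ω)
      = (s ^ (2 * H) + t ^ (2 * H) - |t - s| ^ (2 * H)) / 2

/-- `V_n = ∑_{k=0}^{n-1} H_q (n^H (B_{(k+1)/n} - B_{k/n}))`, where `H_q` is the Hermite
polynomial of degree `q`. -/
noncomputable def hermiteVariation {Ω : Type*} [MeasureSpace Ω]
    (B : ℝ → Ω → ℝ) (H : ℝ) (q n : ℕ) (ω : Ω) : ℝ :=
  ∑ k ∈ Finset.range n,
    Polynomial.aeval
      ((n : ℝ) ^ H * (B (((k : ℝ) + 1) / n) ω - B ((k : ℝ) / n) ω))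
      (Polynomial.hermite q)

lemma sum_range_add_rpow_neg_le {p K : ℝ} (hp : 1 < p) (hK : 0 < K) (N : ℕ) :
    ∑ i ∈ Finset.range N, ((i : ℝ) + K + 1) ^ (-p) ≤ K ^ (1 - p) / (p - 1) := by
  have hanti : AntitoneOn (fun x : ℝ => x ^ (-p)) (Set.Icc K (K + N)) := fun x hx y hy hxy =>
    rpow_le_rpow_of_nonpos (hK.trans_le hx.1) hxy (by linarith)
  have hint : ∫ x in K..K + N, x ^ (-p) = (K ^ (1 - p) - (K + N) ^ (1 - p)) / (p - 1) := by
    have h0 : (0 : ℝ) ∉ Set.uIcc K (K + N) := by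
      rw [Set.uIcc_of_le (by simp)]
      exact fun h => hK.not_ge h.1
    rw [integral_rpow (Or.inr ⟨by linarith, h0⟩), ← neg_div_neg_eq, neg_sub, neg_add_eq_sub,
      neg_sub]
  calc ∑ i ∈ Finset.range N, ((i : ℝ) + K + 1) ^ (-p)
      = ∑ i ∈ Finset.range N, (K + ↑(i + 1)) ^ (-p) :=
        Finset.sum_congr rfl fun i _ => by push_cast; ring_nf
    _ ≤ ∫ x in K..K + N, x ^ (-p) := hanti.sum_le_integral
    _ ≤ K ^ (1 - p) / (p - 1) := by
        rw [hint]
        have := rpow_nonneg (by positivity : (0:ℝ) ≤ K + N) (1 - p)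
        exact div_le_div_of_nonneg_right (by linarith) (by linarith)

lemma summable_and_tsum_le_of_le_mul_rpow_neg {a : ℕ → ℝ} (ha0 : ∀ n, 0 ≤ a n)
    (ha1 : ∀ n, a n ≤ 1) {p A : ℝ} (hp : 1 < p) (hA : 0 < A) {n₀ : ℕ}
    (h : ∀ n, n₀ ≤ n → a n ≤ A * ((n : ℝ) + 1) ^ (-p)) :
    Summable a ∧ ∑' n, a n ≤ n₀ + 1 + A ^ p⁻¹ * (p / (p - 1)) := by
  set κ := A ^ p⁻¹ with hκ_def
  have hκ : 0 < κ := by positivity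
  -- `κ` is the cut-off at which the tail bound `A M^(1-p) / (p-1)` becomes `κ / (p-1)`
  have hAκ : A * κ ^ (1 - p) = κ := by
    rw [hκ_def, ← rpow_mul hA.le]
    nth_rewrite 1 [← rpow_one A]
    rw [← rpow_add hA]
    congr 1
    field_simp
    ring
  set M := max n₀ ⌈κ⌉₊
  have hMκ : κ ≤ M := (Nat.le_ceil κ).trans (by exact_mod_cast le_max_right _ _)
  have hMle : (M : ℝ) ≤ n₀ + κ + 1 := by
    have := Nat.ceil_lt_add_one hκ.le
    have : (M : ℝ) ≤ n₀ + ⌈κ⌉₊ := by exact_mod_cast max_le_iff.2 ⟨by omega, by omega⟩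
    linarith
  have htail : ∀ N, ∑ i ∈ Finset.range N, a (i + M) ≤ κ / (p - 1) := fun N => calc
    ∑ i ∈ Finset.range N, a (i + M) ≤ ∑ i ∈ Finset.range N, A * ((i : ℝ) + M + 1) ^ (-p) :=
        Finset.sum_le_sum fun i _ => by
          simpa [add_assoc] using h (i + M) (le_add_left (le_max_left _ _))
    _ ≤ A * (M ^ (1 - p) / (p - 1)) := by
        rw [← Finset.mul_sum]
        exact mul_le_mul_of_nonneg_left (sum_range_add_rpow_neg_le hp (hκ.trans_le hMκ) N) hA.le
    _ ≤ A * (κ ^ (1 - p) / (p - 1)) := by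
        gcongr A * (?_ / _)
        exact rpow_le_rpow_of_nonpos hκ hMκ (by linarith)
    _ = κ / (p - 1) := by rw [← mul_div_assoc, hAκ]
  have hsum := (summable_nat_add_iff M).1 (summable_of_sum_range_le (fun n => ha0 _) htail)
  refine ⟨hsum, ?_⟩
  have hhead : ∑ i ∈ Finset.range M, a i ≤ M := by
    simpa using Finset.sum_le_sum fun i (_ : i ∈ Finset.range M) => ha1 i
  have hsplit : κ * (p / (p - 1)) = κ + κ / (p - 1) := by
    field_simp [show p - 1 ≠ 0 by linarith]
    ring
  rw [← hsum.sum_add_tsum_nat_add M]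
  linarith [Real.tsum_le_of_sum_range_le (fun n => ha0 _) htail]

lemma tsum_ite_natCast_add_one_lt (y : ℝ) :
    ∑' n : ℕ, (if (n : ℝ) + 1 < y then (1 : ℝ≥0∞) else 0) = ⌈y - 1⌉₊ := by
  rw [tsum_eq_sum (s := Finset.range ⌈y - 1⌉₊) fun n hn => if_neg fun h =>
      hn (Finset.mem_range.2 (Nat.lt_ceil.2 (by linarith))),
    Finset.sum_congr rfl fun n hn => if_pos (by linarith [Nat.lt_ceil.1 (Finset.mem_range.1 hn)])]
  simp

lemma natCeil_sub_one_le_ofReal (y : ℝ) : (⌈y - 1⌉₊ : ℝ≥0∞) ≤ ENNReal.ofReal y := by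
  rcases le_or_gt y 1 with hy | hy
  · simp [Nat.ceil_eq_zero.2 (by linarith : y - 1 ≤ 0)]
  · rw [← ENNReal.ofReal_natCast]
    exact ENNReal.ofReal_le_ofReal (by linarith [Nat.ceil_lt_add_one (by linarith : 0 ≤ y - 1)])

lemma ofReal_le_natCeil_sub_one_add_one (y : ℝ) :
    ENNReal.ofReal y ≤ (⌈y - 1⌉₊ : ℝ≥0∞) + 1 := by
  rw [← ENNReal.ofReal_natCast, ← ENNReal.ofReal_one,
    ← ENNReal.ofReal_add (by positivity) zero_le_one]
  exact ENNReal.ofReal_le_ofReal (by linarith [Nat.le_ceil (y - 1)])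

section

variable {Ω : Type*} [MeasurableSpace Ω] {μ : Measure Ω}

lemma tsum_measure_natCast_add_one_lt {Y : Ω → ℝ} (hY : AEMeasurable Y μ) :
    ∑' n : ℕ, μ {ω | (n : ℝ) + 1 < Y ω} = ∫⁻ ω, (⌈Y ω - 1⌉₊ : ℝ≥0∞) ∂μ := by
  have hms : ∀ n : ℕ, NullMeasurableSet {ω | (n : ℝ) + 1 < Y ω} μ := fun n =>
    nullMeasurableSet_lt aemeasurable_const hY
  calc ∑' n : ℕ, μ {ω | (n : ℝ) + 1 < Y ω}
      = ∑' n : ℕ, ∫⁻ ω, {ω | (n : ℝ) + 1 < Y ω}.indicator 1 ω ∂μ :=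
        tsum_congr fun n => (lintegral_indicator_one₀ (hms n)).symm
    _ = ∫⁻ ω, ∑' n : ℕ, {ω | (n : ℝ) + 1 < Y ω}.indicator 1 ω ∂μ :=
        (lintegral_tsum fun n => aemeasurable_one.indicator₀ (hms n)).symm
    _ = ∫⁻ ω, (⌈Y ω - 1⌉₊ : ℝ≥0∞) ∂μ := by
        simp only [Set.indicator_apply, Set.mem_ofPred_eq, Pi.one_apply,
          tsum_ite_natCast_add_one_lt]

lemma tsum_measureReal_natCast_add_one_lt_bounds [IsProbabilityMeasure μ] {Y : Ω → ℝ}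
    (hY : Integrable Y μ) (hY0 : ∀ ω, 0 ≤ Y ω) :
    Summable (fun n : ℕ => μ.real {ω | (n : ℝ) + 1 < Y ω}) ∧
      ∑' n : ℕ, μ.real {ω | (n : ℝ) + 1 < Y ω} ≤ ∫ ω, Y ω ∂μ ∧
      ∫ ω, Y ω ∂μ ≤ ∑' n : ℕ, μ.real {ω | (n : ℝ) + 1 < Y ω} + 1 := by
  have hlint : ∫⁻ ω, ENNReal.ofReal (Y ω) ∂μ = ENNReal.ofReal (∫ ω, Y ω ∂μ) :=
    (ofReal_integral_eq_lintegral_ofReal hY (ae_of_all _ hY0)).symm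
  have hS := tsum_measure_natCast_add_one_lt hY.aemeasurable
  have hle : ∑' n : ℕ, μ {ω | (n : ℝ) + 1 < Y ω} ≤ ENNReal.ofReal (∫ ω, Y ω ∂μ) := by
    rw [hS, ← hlint]
    exact lintegral_mono fun ω => natCeil_sub_one_le_ofReal _
  have hge : ENNReal.ofReal (∫ ω, Y ω ∂μ) ≤ ∑' n : ℕ, μ {ω | (n : ℝ) + 1 < Y ω} + 1 := by
    rw [hS, ← hlint]
    calc ∫⁻ ω, ENNReal.ofReal (Y ω) ∂μ ≤ ∫⁻ ω, ((⌈Y ω - 1⌉₊ : ℝ≥0∞) + 1) ∂μ :=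
          lintegral_mono fun ω => ofReal_le_natCeil_sub_one_add_one _
      _ = ∫⁻ ω, (⌈Y ω - 1⌉₊ : ℝ≥0∞) ∂μ + 1 := by
          rw [lintegral_add_right _ measurable_const, lintegral_one, measure_univ]
  have hfin : ∑' n : ℕ, μ {ω | (n : ℝ) + 1 < Y ω} ≠ ∞ :=
    ne_top_of_le_ne_top ENNReal.ofReal_ne_top hle
  have hreal : ∑' n : ℕ, μ.real {ω | (n : ℝ) + 1 < Y ω} =
      (∑' n : ℕ, μ {ω | (n : ℝ) + 1 < Y ω}).toReal :=
    (ENNReal.tsum_toReal_eq fun n => measure_ne_top _ _).symm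
  have hI := integral_nonneg (f := Y) (μ := μ) hY0
  refine ⟨ENNReal.summable_toReal hfin, ?_, ?_⟩
  · rw [hreal, ← ENNReal.toReal_ofReal hI]
    exact ENNReal.toReal_mono ENNReal.ofReal_ne_top hle
  · rw [hreal, ← ENNReal.toReal_ofReal hI]
    simpa [ENNReal.toReal_add hfin] using ENNReal.toReal_mono (by finiteness) hge

lemma tsum_measureReal_mul_rpow_lt_bounds [IsProbabilityMeasure μ] {R : Ω → ℝ}
    (hR0 : ∀ ω, 0 ≤ R ω) {β s : ℝ} (hβ : 0 < β) (hs : 0 < s)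
    (hint : Integrable (fun ω => R ω ^ β⁻¹) μ) :
    Summable (fun n : ℕ => μ.real {ω | s * ((n : ℝ) + 1) ^ β < R ω}) ∧
      ∑' n : ℕ, μ.real {ω | s * ((n : ℝ) + 1) ^ β < R ω} ≤ s ^ (-β⁻¹) * ∫ ω, R ω ^ β⁻¹ ∂μ ∧
      s ^ (-β⁻¹) * ∫ ω, R ω ^ β⁻¹ ∂μ ≤ ∑' n : ℕ, μ.real {ω | s * ((n : ℝ) + 1) ^ β < R ω} + 1 := by
  have hsets : ∀ n : ℕ, {ω | s * ((n : ℝ) + 1) ^ β < R ω} =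
      {ω | (n : ℝ) + 1 < s ^ (-β⁻¹) * R ω ^ β⁻¹} := fun n => by
    ext ω
    rw [Set.mem_ofPred_eq, Set.mem_ofPred_eq, rpow_neg hs.le, ← div_eq_inv_mul,
      ← div_rpow (hR0 ω) hs.le,
      lt_rpow_inv_iff_of_pos (by positivity) (div_nonneg (hR0 ω) hs.le) hβ, lt_div_iff₀ hs,
      mul_comm]
  simp only [hsets, ← integral_const_mul]
  exact tsum_measureReal_natCast_add_one_lt_bounds (hint.const_mul _)
    fun ω => mul_nonneg (by positivity) (rpow_nonneg (hR0 ω) _)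

lemma measureReal_le_abs_le_div_sq [IsFiniteMeasure μ] {f : Ω → ℝ}
    (hf : AEStronglyMeasurable f μ) {t δ : ℝ} (ht : 0 < t) (hδ0 : 0 ≤ δ)
    (hδ : eLpNorm f 2 μ ≤ ENNReal.ofReal δ) :
    μ.real {ω | t ≤ |f ω|} ≤ (δ / t) ^ 2 := by
  have h := mul_meas_ge_le_pow_eLpNorm' μ two_ne_zero ENNReal.ofNat_ne_top hf (ENNReal.ofReal t)
  have hset : {ω | ENNReal.ofReal t ≤ ‖f ω‖ₑ} = {ω | t ≤ |f ω|} := by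
    ext ω
    simp [← ofReal_norm, ENNReal.ofReal_le_ofReal_iff (abs_nonneg _)]
  rw [hset, ENNReal.toReal_ofNat] at h
  have h2 : ENNReal.ofReal t ^ (2:ℝ) * μ {ω | t ≤ |f ω|} ≤ ENNReal.ofReal δ ^ (2:ℝ) :=
    h.trans (by gcongr)
  have h3 := ENNReal.toReal_mono (by finiteness) h2
  rw [ENNReal.toReal_mul, ← ENNReal.toReal_rpow, ← ENNReal.toReal_rpow, ENNReal.toReal_ofReal ht.le,
    ENNReal.toReal_ofReal hδ0, ← measureReal_def] at h3
  rw [div_pow, le_div_iff₀ (by positivity), mul_comm]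
  exact_mod_cast h3

lemma abs_measureReal_lt_sub_measureReal_lt_le [IsFiniteMeasure μ] (f g : Ω → ℝ) {x θ : ℝ}
    (hθx : 0 ≤ θ * x) :
    |μ.real {ω | x < f ω} - μ.real {ω | x < g ω}| ≤
      μ.real {ω | (1 - θ) * x < g ω} - μ.real {ω | (1 + θ) * x < g ω} +
        μ.real {ω | θ * x ≤ |f ω - g ω|} := by
  have hf : μ.real {ω | x < f ω} ≤
      μ.real {ω | (1 - θ) * x < g ω} + μ.real {ω | θ * x ≤ |f ω - g ω|} := by
    refine (measureReal_mono fun ω (hω : x < f ω) => ?_).trans (measureReal_union_le _ _)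
    refine or_iff_not_imp_right.2 fun h => ?_
    simp only [Set.mem_ofPred_eq, not_le] at h ⊢
    linarith [le_abs_self (f ω - g ω)]
  have hg : μ.real {ω | (1 + θ) * x < g ω} ≤
      μ.real {ω | x < f ω} + μ.real {ω | θ * x ≤ |f ω - g ω|} := by
    refine (measureReal_mono fun ω (hω : (1 + θ) * x < g ω) => ?_).trans (measureReal_union_le _ _)
    refine or_iff_not_imp_right.2 fun h => ?_
    simp only [Set.mem_ofPred_eq, not_le] at h ⊢
    linarith [neg_abs_le (f ω - g ω)]
  have hlower : μ.real {ω | x < g ω} ≤ μ.real {ω | (1 - θ) * x < g ω} :=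
    measureReal_mono fun ω (hω : x < g ω) => show (1 - θ) * x < g ω by linarith
  have hupper : μ.real {ω | (1 + θ) * x < g ω} ≤ μ.real {ω | x < g ω} :=
    measureReal_mono fun ω (hω : (1 + θ) * x < g ω) => show x < g ω by linarith
  rw [abs_sub_le_iff]
  constructor <;> linarith

lemma summable_and_tsum_measureReal_le_abs_sub_le [IsProbabilityMeasure μ] {α : ℝ}
    (hα : 1 / 2 < α) {F : ℕ → Ω → ℝ} {G : Ω → ℝ} (hF : ∀ n, AEMeasurable (F n) μ)
    (hG : AEMeasurable G μ) {δ t : ℝ} (hδ : 0 < δ) (ht : 0 < t) {n₀ : ℕ}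
    (hn₀ : ∀ n, n₀ ≤ n → eLpNorm (F n - G) 2 μ ≤ ENNReal.ofReal δ) :
    Summable (fun n : ℕ => μ.real {ω | t * ((n : ℝ) + 1) ^ α ≤ |F n ω - G ω|}) ∧
      ∑' n : ℕ, μ.real {ω | t * ((n : ℝ) + 1) ^ α ≤ |F n ω - G ω|} ≤
        n₀ + 1 + (δ / t) ^ α⁻¹ * (2 * α / (2 * α - 1)) := by
  have hcheb : ∀ n, n₀ ≤ n → μ.real {ω | t * ((n : ℝ) + 1) ^ α ≤ |F n ω - G ω|} ≤
      (δ / t) ^ 2 * ((n : ℝ) + 1) ^ (-(2 * α)) := fun n hn => by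
    refine (measureReal_le_abs_le_div_sq ((hF n).sub hG).aestronglyMeasurable (by positivity)
      hδ.le (hn₀ n hn)).trans_eq ?_
    rw [rpow_neg (by positivity), mul_comm 2 α, rpow_mul (by positivity), rpow_two]
    field_simp
  have hexp : ((δ / t) ^ 2) ^ (2 * α)⁻¹ = (δ / t) ^ α⁻¹ := by
    rw [← rpow_natCast, ← rpow_mul (by positivity)]
    congr 1
    push_cast
    field_simp
  rw [← hexp]
  exact summable_and_tsum_le_of_le_mul_rpow_neg (fun n => measureReal_nonneg)
    (fun n => measureReal_le_one) (by linarith) (by positivity) hcheb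

lemma rpow_inv_mul_abs_tsum_measureReal_sub_le [IsProbabilityMeasure μ] {α : ℝ}
    (hα : 1 / 2 < α) {F : ℕ → Ω → ℝ} {G : Ω → ℝ} (hF : ∀ n, AEMeasurable (F n) μ)
    (hG : AEMeasurable G μ) (hG0 : ∀ ω, 0 ≤ G ω) (hGint : Integrable (fun ω => G ω ^ α⁻¹) μ)
    {θ δ s : ℝ} (hθ0 : 0 < θ) (hθ1 : θ < 1) (hδ : 0 < δ) (hs : 0 < s) {n₀ : ℕ}
    (hn₀ : ∀ n, n₀ ≤ n → eLpNorm (F n - G) 2 μ ≤ ENNReal.ofReal δ) :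
    s ^ α⁻¹ * |∑' n : ℕ, (μ.real {ω | s * ((n : ℝ) + 1) ^ α < F n ω} -
        μ.real {ω | s * ((n : ℝ) + 1) ^ α < G ω})| ≤
      (∫ ω, G ω ^ α⁻¹ ∂μ) * ((1 - θ) ^ (-α⁻¹) - (1 + θ) ^ (-α⁻¹)) +
        (δ / θ) ^ α⁻¹ * (2 * α / (2 * α - 1)) + s ^ α⁻¹ * (n₀ + 2) := by
  have hα0 : 0 < α := by linarith
  set I := ∫ ω, G ω ^ α⁻¹ ∂μ
  obtain ⟨hlo_sum, hlo_le, -⟩ := tsum_measureReal_mul_rpow_lt_bounds (μ := μ) hG0 hα0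
    (by nlinarith : 0 < (1 - θ) * s) hGint
  obtain ⟨hhi_sum, -, hhi_ge⟩ := tsum_measureReal_mul_rpow_lt_bounds (μ := μ) hG0 hα0
    (by nlinarith : 0 < (1 + θ) * s) hGint
  obtain ⟨hdev_sum, hdev_le⟩ := summable_and_tsum_measureReal_le_abs_sub_le hα hF hG hδ
    (by positivity : 0 < θ * s) hn₀
  simp only [mul_assoc] at hlo_sum hlo_le hhi_sum hhi_ge hdev_sum hdev_le
  have habs : |∑' n : ℕ, (μ.real {ω | s * ((n : ℝ) + 1) ^ α < F n ω} -
        μ.real {ω | s * ((n : ℝ) + 1) ^ α < G ω})| ≤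
      ∑' n : ℕ, μ.real {ω | (1 - θ) * (s * ((n : ℝ) + 1) ^ α) < G ω} -
        ∑' n : ℕ, μ.real {ω | (1 + θ) * (s * ((n : ℝ) + 1) ^ α) < G ω} +
        ∑' n : ℕ, μ.real {ω | θ * (s * ((n : ℝ) + 1) ^ α) ≤ |F n ω - G ω|} := by
    rw [← hlo_sum.tsum_sub hhi_sum, ← (hlo_sum.sub hhi_sum).tsum_add hdev_sum,
      ← Real.norm_eq_abs]
    exact tsum_of_norm_bounded ((hlo_sum.sub hhi_sum).add hdev_sum).hasSum fun n =>
      abs_measureReal_lt_sub_measureReal_lt_le (μ := μ) (F n) G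
        (by positivity : 0 ≤ θ * (s * ((n : ℝ) + 1) ^ α))
  have hscale : ∀ u : ℝ, 0 < u → s ^ α⁻¹ * (u * s) ^ (-α⁻¹) = u ^ (-α⁻¹) := fun u hu => by
    rw [mul_rpow hu.le hs.le, rpow_neg hs.le]
    field_simp
  have hdev_scale : s ^ α⁻¹ * (δ / (θ * s)) ^ α⁻¹ = (δ / θ) ^ α⁻¹ := by
    rw [← mul_rpow hs.le (by positivity)]
    congr 1
    field_simp
  calc s ^ α⁻¹ * |_|
      ≤ s ^ α⁻¹ * (((1 - θ) * s) ^ (-α⁻¹) * I - (((1 + θ) * s) ^ (-α⁻¹) * I - 1) +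
          (n₀ + 1 + (δ / (θ * s)) ^ α⁻¹ * (2 * α / (2 * α - 1)))) := by
        gcongr
        linarith
    _ = _ := by
        linear_combination I * hscale (1 - θ) (by linarith) - I * hscale (1 + θ) (by linarith) +
          (2 * α / (2 * α - 1)) * hdev_scale

theorem tendsto_rpow_inv_mul_tsum_measureReal_sub [IsProbabilityMeasure μ] {α : ℝ}
    (hα : 1 / 2 < α) {F : ℕ → Ω → ℝ} {G : Ω → ℝ} (hF : ∀ n, AEMeasurable (F n) μ)
    (hG : AEMeasurable G μ) (hG0 : ∀ ω, 0 ≤ G ω) (hGint : Integrable (fun ω => G ω ^ α⁻¹) μ)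
    (hconv : Tendsto (fun n => eLpNorm (F n - G) 2 μ) atTop (𝓝 0)) :
    Tendsto (fun s : ℝ => s ^ α⁻¹ * ∑' n : ℕ, (μ.real {ω | s * ((n : ℝ) + 1) ^ α < F n ω} -
        μ.real {ω | s * ((n : ℝ) + 1) ^ α < G ω})) (𝓝[>] 0) (𝓝 0) := by
  have hα0 : 0 < α⁻¹ := by rw [inv_pos]; linarith
  have small : ∀ f : ℝ → ℝ, ContinuousAt f 0 → f 0 = 0 → ∀ η > 0, ∀ᶠ x in 𝓝[>] 0, f x < η :=
    fun f hf hf0 η hη => nhdsWithin_le_nhds (hf.eventually (gt_mem_nhds (by rwa [hf0])))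
  rw [NormedAddGroup.tendsto_nhds_zero]
  intro η hη
  obtain ⟨θ, hθη, hθ0, hθ1⟩ := ((small (fun θ => (∫ ω, G ω ^ α⁻¹ ∂μ) *
      ((1 - θ) ^ (-α⁻¹) - (1 + θ) ^ (-α⁻¹))) (by fun_prop (disch := norm_num)) (by simp)
      (η / 3) (by positivity)).and (Ioo_mem_nhdsGT one_pos)).exists
  obtain ⟨δ, hδη, hδ0 : 0 < δ⟩ := ((small (fun δ => (δ / θ) ^ α⁻¹ * (2 * α / (2 * α - 1)))
      (by fun_prop (disch := positivity)) (by simp [zero_rpow hα0.ne'])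
      (η / 3) (by positivity)).and self_mem_nhdsWithin).exists
  obtain ⟨n₀, hn₀⟩ := eventually_atTop.1 (hconv.eventually_le_const (ENNReal.ofReal_pos.2 hδ0))
  filter_upwards [small (fun s => s ^ α⁻¹ * (n₀ + 2)) (by fun_prop (disch := positivity))
      (by simp [zero_rpow hα0.ne']) (η / 3) (by positivity), self_mem_nhdsWithin]
    with s hsη (hs : 0 < s)
  rw [norm_mul, norm_of_nonneg (rpow_nonneg hs.le _), Real.norm_eq_abs]
  linarith [rpow_inv_mul_abs_tsum_measureReal_sub_le hα hF hG hG0 hGint hθ0 hθ1 hδ0 hs hn₀]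

end

lemma memLp_abs_two_of_integrable_sq {Ω : Type*} [MeasurableSpace Ω] {μ : Measure Ω}
    {Z : Ω → ℝ} (hZ : Integrable (fun ω => Z ω ^ 2) μ) : MemLp (fun ω => |Z ω|) 2 μ := by
  have hm : AEStronglyMeasurable (fun ω => |Z ω|) μ :=
    (hZ.aemeasurable.sqrt.congr (ae_of_all _ fun ω => sqrt_sq_eq_abs (Z ω))).aestronglyMeasurable
  exact (memLp_two_iff_integrable_sq hm).2 (by simpa only [sq_abs] using hZ)

lemma integrable_rpow_of_memLp_two {Ω : Type*} [MeasurableSpace Ω] {μ : Measure Ω}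
    [IsFiniteMeasure μ] {f : Ω → ℝ} (hf : MemLp f 2 μ) (hf0 : ∀ ω, 0 ≤ f ω) {r : ℝ}
    (hr0 : 0 ≤ r) (hr : r ≤ 2) : Integrable (fun ω => f ω ^ r) μ := by
  have := (hf.mono_exponent (p := ENNReal.ofReal r) (by simpa using hr)).integrable_norm_rpow'
  simpa [ENNReal.toReal_ofReal hr0, norm_of_nonneg (hf0 _)] using this

lemma measurable_hermiteVariation {Ω : Type*} [MeasureSpace Ω] {B : ℝ → Ω → ℝ}
    (hB : ∀ t, Measurable (B t)) (H : ℝ) (q n : ℕ) : Measurable (hermiteVariation B H q n) :=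
  Finset.measurable_fun_sum _ fun _ _ => (Polynomial.hermite q).continuous_aeval.measurable.comp
    (measurable_const.mul ((hB _).sub (hB _)))

theorem stmt_11_general {Ω : Type*} [MeasureSpace Ω] [IsProbabilityMeasure (ℙ : Measure Ω)]
    (q : ℕ) (hq : 2 ≤ q) (H : ℝ) (hH0 : 1 - 1 / (2 * q) < H)
    (B : ℝ → Ω → ℝ) (hB : IsFractionalBrownianMotion B H)
    (c₂ : ℝ) (Z : Ω → ℝ)
    (hZvar : (∫ ω, (Z ω) ^ 2 ∂(ℙ : Measure Ω)) = 1)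
    (hconv : Tendsto
      (fun n : ℕ => eLpNorm
        (fun ω => hermiteVariation B H q n ω / (c₂ * (n : ℝ) ^ (1 - q * (1 - H))) - Z ω)
        2 (ℙ : Measure Ω))
      atTop (𝓝 0))
    (c : ℝ) (hc : 0 < c) :
    Tendsto
      (fun ε : ℝ =>
        (c * ε) ^ (1 / (1 - q * (1 - H))) *
          ∑' n : ℕ,
            ((ℙ {ω | c * ε * ((n : ℝ) + 1) ^ (1 - q * (1 - H)) <
                |hermiteVariation B H q (n + 1) ω /
                  (c₂ * ((n : ℝ) + 1) ^ (1 - q * (1 - H)))|}).toReal -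
              (ℙ {ω | c * ε * ((n : ℝ) + 1) ^ (1 - q * (1 - H)) < |Z ω|}).toReal))
      (𝓝[>] 0) (𝓝 0) := by
  set α : ℝ := 1 - q * (1 - H)
  have hα : 1 / 2 < α := by
    have hq0 : (0 : ℝ) < q := by exact_mod_cast (by omega : 0 < q)
    have := mul_lt_mul_of_pos_left (show 1 - H < 1 / (2 * q) by linarith) hq0
    rw [show (q : ℝ) * (1 / (2 * q)) = 1 / 2 by field_simp] at this
    linarith
  have hZ : MemLp (fun ω => |Z ω|) 2 ℙ := memLp_abs_two_of_integrable_sq <| by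
    -- the Bochner integral of a non-integrable function is `0`, not `1`
    by_contra h
    rw [integral_undef h] at hZvar
    exact zero_ne_one hZvar
  have hconv' := hconv.comp (tendsto_add_atTop_nat 1)
  simp only [Function.comp_def, Nat.cast_add, Nat.cast_one] at hconv'
  have key := tendsto_rpow_inv_mul_tsum_measureReal_sub hα
    (F := fun n ω => |hermiteVariation B H q (n + 1) ω / (c₂ * ((n : ℝ) + 1) ^ α)|)
    (fun n => ((measurable_hermiteVariation hB.measurable H q _).div_const _).abs.aemeasurable)
    hZ.aestronglyMeasurable.aemeasurable (fun ω => abs_nonneg _)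
    (integrable_rpow_of_memLp_two hZ (fun ω => abs_nonneg _) (by positivity)
      (by rw [inv_le_comm₀ (by linarith) two_pos]; linarith))
    (tendsto_of_tendsto_of_tendsto_of_le_of_le tendsto_const_nhds hconv' (fun _ => zero_le)
      fun n => eLpNorm_mono fun ω => abs_abs_sub_abs_le_abs_sub _ _)
  rw [one_div]
  exact key.comp (tendsto_iff_comap.2 (comap_mulLeft_nhdsGT_zero hc).ge)

theorem stmt_11 {Ω : Type*} [MeasureSpace Ω] [IsProbabilityMeasure (ℙ : Measure Ω)]
    (q : ℕ) (hq : 2 ≤ q) (H : ℝ) (hH0 : 1 - 1 / (2 * q) < H) (hH1 : H < 1)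
    (B : ℝ → Ω → ℝ) (hB : IsFractionalBrownianMotion B H)
    (c₂ : ℝ) (hc₂ : 0 < c₂) (Z : Ω → ℝ)
    (hZvar : (∫ ω, (Z ω) ^ 2 ∂(ℙ : Measure Ω)) = 1)
    (hconv : Tendsto
      (fun n : ℕ => eLpNorm
        (fun ω => hermiteVariation B H q n ω / (c₂ * (n : ℝ) ^ (1 - q * (1 - H))) - Z ω)
        2 (ℙ : Measure Ω))
      atTop (𝓝 0))
    (c : ℝ) (hc : 0 < c) :
    Tendsto
      (fun ε : ℝ =>
        (c * ε) ^ (1 / (1 - q * (1 - H))) *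
          ∑' n : ℕ,
            ((ℙ {ω | c * ε * ((n : ℝ) + 1) ^ (1 - q * (1 - H)) <
                |hermiteVariation B H q (n + 1) ω /
                  (c₂ * ((n : ℝ) + 1) ^ (1 - q * (1 - H)))|}).toReal -
              (ℙ {ω | c * ε * ((n : ℝ) + 1) ^ (1 - q * (1 - H)) < |Z ω|}).toReal))
      (𝓝[>] 0) (𝓝 0) :=
  stmt_11_general q hq H hH0 B hB c₂ Z hZvar hconv c hc
end
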